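/- The family TCS with the cut operations is a model of the parameterized theory of explicit nondeterminism with cut and scope: for every n and all elements of the appropriate levels, orT n is associative with two-sided unit failT n; orT n (cutT n x) y = cutT n x; orT n x (cutT n y) = cutT n (orT n x y); cutT n (cutT n x) = cutT n x; scopeT n (failT (n+1)) = failT n; scopeT n (cutT (n+1) w) = scopeT n w; and scopeT n (orT (n+1) (closeT n x) w) = orT n x (scopeT n w). -/
import Mathlib


namespace Stmt9

/-- `Idem B = B ⊕ B`: `Sum.inl l` is an unstarred list, `Sum.inr l` a starred one. -/
abbrev Idem (B : Type) : Type := B ⊕ B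

/-- Auxiliary family with `W A (n+1) = Idem (List (W A n))`. -/
abbrev W (A : Type) : ℕ → Type
  | 0 => A
  | n + 1 => Idem (List (W A n))

/-- `TCS A 0 = Idem (List A)` and `TCS A (n+1) = Idem (List (TCS A n))`. -/
abbrev TCS (A : Type) (n : ℕ) : Type := Idem (List (W A n))

/-- Failure is the unstarred empty list. -/
def failT (A : Type) (n : ℕ) : TCS A n := Sum.inl []

/-- `cut` stars a list. -/
def cutT (A : Type) (n : ℕ) : TCS A n → TCS A n
  | Sum.inl xs => Sum.inr xs
  | Sum.inr xs => Sum.inr xs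

/-- Choice is concatenation taking stars into account. -/
def orT (A : Type) (n : ℕ) : TCS A n → TCS A n → TCS A n
  | Sum.inl xs, Sum.inl ys => Sum.inl (xs ++ ys)
  | Sum.inl xs, Sum.inr ys => Sum.inr (xs ++ ys)
  | Sum.inr xs, _ => Sum.inr xs

/-- Closing a scope wraps its continuation as an unstarred singleton list. -/
def closeT (A : Type) (n : ℕ) (x : TCS A n) : TCS A (n + 1) := Sum.inl [x]

/-- Flattening of a list of computations via `orT`. -/
def scopeList (A : Type) (n : ℕ) : List (TCS A n) → TCS A n
  | [] => failT A n
  | x :: xs => orT A n x (scopeList A n xs)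

/-- `scope` erases a star and flattens via `orT`. -/
def scopeT (A : Type) (n : ℕ) : TCS A (n + 1) → TCS A n
  | Sum.inl l => scopeList A n l
  | Sum.inr l => scopeList A n l

theorem stmt_9 (A : Type) :
    (∀ n (x y z : TCS A n), orT A n (orT A n x y) z = orT A n x (orT A n y z)) ∧
    (∀ n (x : TCS A n), orT A n x (failT A n) = x) ∧
    (∀ n (x : TCS A n), orT A n (failT A n) x = x) ∧
    (∀ n (x y : TCS A n), orT A n (cutT A n x) y = cutT A n x) ∧
    (∀ n (x y : TCS A n), orT A n x (cutT A n y) = cutT A n (orT A n x y)) ∧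
    (∀ n (x : TCS A n), cutT A n (cutT A n x) = cutT A n x) ∧
    (∀ n, scopeT A n (failT A (n + 1)) = failT A n) ∧
    (∀ n (w : TCS A (n + 1)), scopeT A n (cutT A (n + 1) w) = scopeT A n w) ∧
    (∀ n (x : TCS A n) (w : TCS A (n + 1)),
      scopeT A n (orT A (n + 1) (closeT A n x) w) = orT A n x (scopeT A n w)) := by

  refine ⟨?_, ?_, ?_, ?_, ?_, ?_, ?_, ?_, ?_⟩
  · rintro n (x|x) (y|y) (z|z) <;> simp [orT]
  · rintro n (x|x) <;> simp [orT, failT]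
  · rintro n (x|x) <;> simp [orT, failT]
  · rintro n (x|x) (y|y) <;> simp [orT, cutT]
  · rintro n (x|x) (y|y) <;> simp [orT, cutT]
  · rintro n (x|x) <;> simp [cutT]
  · intro n; rfl
  · rintro n (w|w) <;> rfl
  · rintro n x (w|w) <;> simp [orT, closeT, scopeT, scopeList]


end Stmt9
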